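/- arXiv:2410.16391 — 7 statements merged into one kernel-verified Lean document; each statement's English description precedes it below -/
import Mathlib

section
/- Let ψ₀ = E[Y₁] − E[Y₁⁽⁰⁾]. Assume consistency (Yᵢ = Yᵢ⁽⁰⁾ almost surely for each control unit i = 2, …, J+1) and linear equi-confounding: E[Y₁⁽⁰⁾] − (1/J)·Σ_{i=2}^{J+1} E[Yᵢ⁽⁰⁾] = E[F₁] − (1/J)·Σ_{i=2}^{J+1} E[Fᵢ]. Then ψ₀ = (E[Y₁] − E[F₁]) − (1/J)·Σ_{i=2}^{J+1} (E[Yᵢ] − E[Fᵢ]). -/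
open MeasureTheory ProbabilityTheory

/-- **Theorem 3.1 (linear equi-confounding identification).**
Under consistency for the control units and the linear equi-confounding
assumption, the causal parameter `ψ₀ = E[Y₁] − E[Y₁⁽⁰⁾]` is identified as
`(E[Y₁] − E[F₁]) − (1/J)·Σ_{i=2}^{J+1} (E[Yᵢ] − E[Fᵢ])`. -/
theorem linear_equiconfounding_identification
    {Ω : Type*} [MeasureSpace Ω] [IsProbabilityMeasure (ℙ : Measure Ω)]
    (J : ℕ) (hJ : 1 ≤ J)
    (Y Y0 F : ℕ → Ω → ℝ)
    (hYint : ∀ i ∈ Finset.Icc 1 (J + 1), Integrable (Y i) ℙ)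
    (hY0int : ∀ i ∈ Finset.Icc 1 (J + 1), Integrable (Y0 i) ℙ)
    (hFint : ∀ i ∈ Finset.Icc 1 (J + 1), Integrable (F i) ℙ)
    (hcons : ∀ i ∈ Finset.Icc 2 (J + 1), Y i =ᵐ[ℙ] Y0 i)
    (hequi :
      (∫ ω, Y0 1 ω) - (1 / (J : ℝ)) * ∑ i ∈ Finset.Icc 2 (J + 1), ∫ ω, Y0 i ω
        = (∫ ω, F 1 ω) - (1 / (J : ℝ)) * ∑ i ∈ Finset.Icc 2 (J + 1), ∫ ω, F i ω) :
    (∫ ω, Y 1 ω) - (∫ ω, Y0 1 ω)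
      = ((∫ ω, Y 1 ω) - (∫ ω, F 1 ω))
        - (1 / (J : ℝ)) * ∑ i ∈ Finset.Icc 2 (J + 1), ((∫ ω, Y i ω) - (∫ ω, F i ω)) := by
  have hsum : ∀ i ∈ Finset.Icc 2 (J + 1), (∫ ω, Y i ω) = ∫ ω, Y0 i ω := fun i hi =>
    integral_congr_ae (hcons i hi)
  have h2 : ∑ i ∈ Finset.Icc 2 (J + 1), ((∫ ω, Y i ω) - (∫ ω, F i ω))
      = (∑ i ∈ Finset.Icc 2 (J + 1), ∫ ω, Y0 i ω)
        - ∑ i ∈ Finset.Icc 2 (J + 1), ∫ ω, F i ω := by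
    rw [← Finset.sum_sub_distrib]
    exact Finset.sum_congr rfl fun i hi => by rw [hsum i hi]
  rw [h2, mul_sub]
  linarith [hequi]
end

section
/- Let ψ₀ = E[Y₁] − E[Y₁⁽⁰⁾] and define the estimator ψ̂ᵉᑫ¹ = (Y₁ − F₁) − (1/J)·Σ_{i=2}^{J+1} (Yᵢ − Fᵢ). Assume consistency (Yᵢ = Yᵢ⁽⁰⁾ almost surely for each i = 2, …, J+1) and linear equi-confounding: E[Y₁⁽⁰⁾] − (1/J)·Σ_{i=2}^{J+1} E[Yᵢ⁽⁰⁾] = E[F₁] − (1/J)·Σ_{i=2}^{J+1} E[Fᵢ]. Then E[ψ̂ᵉᑫ¹] = ψ₀, i.e., ψ̂ᵉᑫ¹ is an unbiased estimator of ψ₀. -/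
open MeasureTheory ProbabilityTheory

/-- **Corollary (unbiasedness of the linear equi-confounding estimator).**
Under consistency for the control units and linear equi-confounding, the estimator
`ψ̂ᵉᑫ¹ = (Y₁ − F₁) − (1/J)·Σ_{i=2}^{J+1} (Yᵢ − Fᵢ)` is unbiased for
`ψ₀ = E[Y₁] − E[Y₁⁽⁰⁾]`. -/
theorem linear_equiconfounding_unbiased
    {Ω : Type*} [MeasureSpace Ω] [IsProbabilityMeasure (ℙ : Measure Ω)]
    (J : ℕ) (hJ : 1 ≤ J)
    (Y Y0 F : ℕ → Ω → ℝ)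
    (hYint : ∀ i ∈ Finset.Icc 1 (J + 1), Integrable (Y i) ℙ)
    (hY0int : ∀ i ∈ Finset.Icc 1 (J + 1), Integrable (Y0 i) ℙ)
    (hFint : ∀ i ∈ Finset.Icc 1 (J + 1), Integrable (F i) ℙ)
    (hcons : ∀ i ∈ Finset.Icc 2 (J + 1), Y i =ᵐ[ℙ] Y0 i)
    (hequi :
      (∫ ω, Y0 1 ω) - (1 / (J : ℝ)) * ∑ i ∈ Finset.Icc 2 (J + 1), ∫ ω, Y0 i ω
        = (∫ ω, F 1 ω) - (1 / (J : ℝ)) * ∑ i ∈ Finset.Icc 2 (J + 1), ∫ ω, F i ω) :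
    (∫ ω, ((Y 1 ω - F 1 ω)
        - (1 / (J : ℝ)) * ∑ i ∈ Finset.Icc 2 (J + 1), (Y i ω - F i ω)))
      = (∫ ω, Y 1 ω) - (∫ ω, Y0 1 ω) := by

  have hsub : ∀ i ∈ Finset.Icc 2 (J + 1), i ∈ Finset.Icc 1 (J + 1) := by
    intro i hi
    simp only [Finset.mem_Icc] at hi ⊢
    omega
  have hYint' : ∀ i ∈ Finset.Icc 2 (J + 1), Integrable (Y i) ℙ :=
    fun i hi => hYint i (hsub i hi)
  have hFint' : ∀ i ∈ Finset.Icc 2 (J + 1), Integrable (F i) ℙ :=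
    fun i hi => hFint i (hsub i hi)
  have h1 : (1 : ℕ) ∈ Finset.Icc 1 (J + 1) := by simp
  have hsumint : Integrable (fun ω => ∑ i ∈ Finset.Icc 2 (J + 1), (Y i ω - F i ω)) ℙ :=
    integrable_finset_sum _ (fun i hi => (hYint' i hi).sub (hFint' i hi))
  have key : (∫ ω, ((Y 1 ω - F 1 ω)
        - (1 / (J : ℝ)) * ∑ i ∈ Finset.Icc 2 (J + 1), (Y i ω - F i ω)))
      = ((∫ ω, Y 1 ω) - (∫ ω, F 1 ω))
        - (1 / (J : ℝ)) * ∑ i ∈ Finset.Icc 2 (J + 1), ((∫ ω, Y i ω) - ∫ ω, F i ω) := by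
    have hA : Integrable (fun ω => Y 1 ω - F 1 ω) ℙ := (hYint 1 h1).sub (hFint 1 h1)
    rw [integral_sub hA (hsumint.const_mul _),
      integral_sub (hYint 1 h1) (hFint 1 h1), integral_const_mul,
      integral_finset_sum (f := fun i ω => Y i ω - F i ω) _ (fun i hi => (hYint' i hi).sub (hFint' i hi))]
    congr 1
    congr 1
    exact Finset.sum_congr rfl fun i hi => integral_sub (hYint' i hi) (hFint' i hi)
  have hYeq : ∀ i ∈ Finset.Icc 2 (J + 1), (∫ ω, Y i ω) = ∫ ω, Y0 i ω :=
    fun i hi => integral_congr_ae (hcons i hi)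
  rw [key, Finset.sum_sub_distrib, Finset.sum_congr rfl hYeq]
  linarith [hequi]
end

section
/- Suppose the potential outcomes and reference outcomes are generated by the structural equations Y⁽⁰⁾_{i,s} = ϱ_s + f(G_i, X_i) + ε_{i,s} and F_{i,t} = ρ_t + g(G_i, Z_i) + ε'_{i,t} for i = 1, …, J+1, s = 1, …, S, t = 1, …, T, where G_i = 1 if i = 1 and G_i = 0 otherwise, X₁, …, X_{J+1} are i.i.d. with common law P_X, Z₁, …, Z_{J+1} are i.i.d. with common law P_Z, the noise variables ε_{i,s} and ε'_{i,t} have mean zero, and E[f(1, X₁) − f(0, X₁)] = E[g(1, Z₁) − g(0, Z₁)] (with all relevant integrability). Then the linear equi-confounding condition holds: E[Y₁⁽⁰⁾] − (1/J)·Σ_{i=2}^{J+1} E[Yᵢ⁽⁰⁾] = E[F₁] − (1/J)·Σ_{i=2}^{J+1} E[Fᵢ], where Yᵢ⁽⁰⁾ = (1/S)·Σ_{s=1}^S Y⁽⁰⁾_{i,s} and Fᵢ = (1/T)·Σ_{t=1}^T F_{i,t}. -/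
/-!
Taking expectations in the structural equations, the mean-zero noise drops out and every unit's
expected time average is a common time effect plus `E[f(G_i, X_i)]`. Since the covariates are
identically distributed, every control unit contributes `E[f(0, X₁)]`, so the treated-minus-control
contrast of the outcomes is `E[f(1, X₁)] − E[f(0, X₁)]`, and likewise `E[g(1, Z₁)] − E[g(0, Z₁)]`
for the reference outcomes; the moment condition equates the two.
-/

open MeasureTheory ProbabilityTheory Finset

lemma one_div_card_mul_sum_const {ι : Type*} {s : Finset ι} (hs : s.Nonempty) (c : ℝ) :
    1 / (#s : ℝ) * ∑ _i ∈ s, c = c := by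
  have hcard : (#s : ℝ) ≠ 0 := by exact_mod_cast hs.card_ne_zero
  rw [sum_const, nsmul_eq_mul]
  field_simp

lemma identDistrib_of_map_eq {Ω ι 𝒳 : Type*} [MeasurableSpace Ω] [MeasurableSpace 𝒳]
    {μ : Measure Ω} {X : ι → Ω → 𝒳}
    {s : Finset ι} {P : Measure 𝒳} (hmeas : ∀ i ∈ s, Measurable (X i))
    (hlaw : ∀ i ∈ s, μ.map (X i) = P) {i j : ι} (hi : i ∈ s) (hj : j ∈ s) :
    IdentDistrib (X i) (X j) μ μ :=
  ⟨(hmeas i hi).aemeasurable, (hmeas j hj).aemeasurable, by rw [hlaw i hi, hlaw j hj]⟩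

section Structural

variable {Ω : Type*} [MeasurableSpace Ω] {μ : Measure Ω} [IsProbabilityMeasure μ]

lemma integral_structural_eq {c : ℝ} {C e Y : Ω → ℝ} (hC : Integrable C μ)
    (he : Integrable e μ) (he0 : ∫ ω, e ω ∂μ = 0) (hY : ∀ ω, Y ω = c + C ω + e ω) :
    Integrable Y μ ∧ ∫ ω, Y ω ∂μ = c + ∫ ω, C ω ∂μ := by
  have hcC : Integrable (fun ω => c + C ω) μ := (integrable_const c).add hC
  rw [funext hY]
  refine ⟨hcC.add he, ?_⟩
  rw [integral_add hcC he, integral_add (integrable_const c) hC, he0]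
  simp

lemma integral_average_structural_eq {ι : Type*} {s : Finset ι} (hs : s.Nonempty)
    {c : ι → ℝ} {C : Ω → ℝ} {e Y : ι → Ω → ℝ} (hC : Integrable C μ)
    (he : ∀ i ∈ s, Integrable (e i) μ) (he0 : ∀ i ∈ s, ∫ ω, e i ω ∂μ = 0)
    (hY : ∀ i ∈ s, ∀ ω, Y i ω = c i + C ω + e i ω) :
    ∫ ω, 1 / (#s : ℝ) * ∑ i ∈ s, Y i ω ∂μ
      = 1 / (#s : ℝ) * ∑ i ∈ s, c i + ∫ ω, C ω ∂μ := by
  have hYi := fun i hi => integral_structural_eq hC (he i hi) (he0 i hi) (hY i hi)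
  rw [integral_const_mul, integral_finsetSum _ fun i hi => (hYi i hi).1,
    sum_congr rfl fun i hi => (hYi i hi).2, sum_add_distrib, mul_add,
    one_div_card_mul_sum_const hs]

lemma integral_average_treated_sub_control_eq {𝒳 : Type*} [MeasurableSpace 𝒳] {J S : ℕ}
    (hJ : 1 ≤ J) (hS : 1 ≤ S) {X : ℕ → Ω → 𝒳} {f : ℕ → 𝒳 → ℝ} {ϱ : ℕ → ℝ}
    {ε Y : ℕ → ℕ → Ω → ℝ} (hf : ∀ b, Measurable (f b))
    (hX : ∀ i ∈ Icc 1 (J + 1), IdentDistrib (X i) (X 1) μ μ)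
    (hε : ∀ i ∈ Icc 1 (J + 1), ∀ s ∈ Icc 1 S, Integrable (ε i s) μ)
    (hε0 : ∀ i ∈ Icc 1 (J + 1), ∀ s ∈ Icc 1 S, ∫ ω, ε i s ω ∂μ = 0)
    (hf1 : Integrable (fun ω => f 1 (X 1 ω)) μ) (hf0 : Integrable (fun ω => f 0 (X 1 ω)) μ)
    (hY : ∀ i ∈ Icc 1 (J + 1), ∀ s ∈ Icc 1 S, ∀ ω,
      Y i s ω = ϱ s + f (if i = 1 then 1 else 0) (X i ω) + ε i s ω) :
    (∫ ω, (1 / (S : ℝ)) * ∑ s ∈ Icc 1 S, Y 1 s ω ∂μ)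
        - (1 / (J : ℝ)) * ∑ i ∈ Icc 2 (J + 1), ∫ ω, (1 / (S : ℝ)) * ∑ s ∈ Icc 1 S, Y i s ω ∂μ
      = (∫ ω, f 1 (X 1 ω) ∂μ) - ∫ ω, f 0 (X 1 ω) ∂μ := by
  have h1 : 1 ∈ Icc 1 (J + 1) := by simp
  have hcontrol : ∀ i ∈ Icc 2 (J + 1), i ∈ Icc 1 (J + 1) ∧ i ≠ 1 := by
    intro i hi
    simp only [mem_Icc] at hi ⊢
    omega
  have havg : ∀ i ∈ Icc 1 (J + 1), Integrable (fun ω => f (if i = 1 then 1 else 0) (X i ω)) μ →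
      ∫ ω, 1 / (S : ℝ) * ∑ s ∈ Icc 1 S, Y i s ω ∂μ
        = 1 / (S : ℝ) * ∑ s ∈ Icc 1 S, ϱ s + ∫ ω, f (if i = 1 then 1 else 0) (X i ω) ∂μ := by
    intro i hi hfi
    have hcardS : (#(Icc 1 S) : ℝ) = S := by simp
    rw [← hcardS]
    exact integral_average_structural_eq (nonempty_Icc.mpr hS) hfi (hε i hi) (hε0 i hi) (hY i hi)
  have hcontrols : ∀ i ∈ Icc 2 (J + 1), ∫ ω, 1 / (S : ℝ) * ∑ s ∈ Icc 1 S, Y i s ω ∂μ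
      = 1 / (S : ℝ) * ∑ s ∈ Icc 1 S, ϱ s + ∫ ω, f 0 (X 1 ω) ∂μ := by
    intro i hi
    obtain ⟨hi, hi1⟩ := hcontrol i hi
    have hXi := (hX i hi).comp (hf 0)
    have hmean : ∫ ω, f 0 (X i ω) ∂μ = ∫ ω, f 0 (X 1 ω) ∂μ := hXi.integral_eq
    rw [havg i hi (by rw [if_neg hi1]; exact hXi.integrable_iff.mpr hf0), if_neg hi1, hmean]
  have hcardJ : (#(Icc 2 (J + 1)) : ℝ) = J := by simp
  rw [havg 1 h1 hf1, if_pos rfl, sum_congr rfl hcontrols, ← hcardJ,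
    one_div_card_mul_sum_const (nonempty_Icc.mpr (by omega))]
  ring

end Structural

theorem structural_model_implies_linear_equiconfounding_general
    {Ω : Type*} [MeasureSpace Ω] [IsProbabilityMeasure (ℙ : Measure Ω)]
    {𝒳 𝒵 : Type*} [MeasurableSpace 𝒳] [MeasurableSpace 𝒵]
    (J S T : ℕ) (hJ : 1 ≤ J) (hS : 1 ≤ S) (hT : 1 ≤ T)
    (X : ℕ → Ω → 𝒳) (Z : ℕ → Ω → 𝒵)
    (PX : Measure 𝒳) (PZ : Measure 𝒵)
    (f : ℕ → 𝒳 → ℝ) (g : ℕ → 𝒵 → ℝ)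
    (ϱ ρ : ℕ → ℝ)
    (ε ε' : ℕ → ℕ → Ω → ℝ)
    (Y0 F : ℕ → ℕ → Ω → ℝ)
    (hfmeas : ∀ b, Measurable (f b)) (hgmeas : ∀ b, Measurable (g b))
    (hXmeas : ∀ i ∈ Finset.Icc 1 (J + 1), Measurable (X i))
    (hZmeas : ∀ i ∈ Finset.Icc 1 (J + 1), Measurable (Z i))
    (hXlaw : ∀ i ∈ Finset.Icc 1 (J + 1), Measure.map (X i) ℙ = PX)
    (hZlaw : ∀ i ∈ Finset.Icc 1 (J + 1), Measure.map (Z i) ℙ = PZ)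
    -- mean-zero integrable noise
    (hεint : ∀ i ∈ Finset.Icc 1 (J + 1), ∀ s ∈ Finset.Icc 1 S, Integrable (ε i s) ℙ)
    (hεmean : ∀ i ∈ Finset.Icc 1 (J + 1), ∀ s ∈ Finset.Icc 1 S, ∫ ω, ε i s ω = 0)
    (hε'int : ∀ i ∈ Finset.Icc 1 (J + 1), ∀ t ∈ Finset.Icc 1 T, Integrable (ε' i t) ℙ)
    (hε'mean : ∀ i ∈ Finset.Icc 1 (J + 1), ∀ t ∈ Finset.Icc 1 T, ∫ ω, ε' i t ω = 0)
    -- integrability of the structural terms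
    (hf1int : Integrable (fun ω => f 1 (X 1 ω)) ℙ)
    (hf0int : Integrable (fun ω => f 0 (X 1 ω)) ℙ)
    (hg1int : Integrable (fun ω => g 1 (Z 1 ω)) ℙ)
    (hg0int : Integrable (fun ω => g 0 (Z 1 ω)) ℙ)
    -- E[f(1, X₁) − f(0, X₁)] = E[g(1, Z₁) − g(0, Z₁)]
    (hmoment :
      (∫ ω, f 1 (X 1 ω)) - (∫ ω, f 0 (X 1 ω))
        = (∫ ω, g 1 (Z 1 ω)) - (∫ ω, g 0 (Z 1 ω)))
    -- structural equations, with G_i = 1 if i = 1 and G_i = 0 otherwise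
    (hY0eq : ∀ i ∈ Finset.Icc 1 (J + 1), ∀ s ∈ Finset.Icc 1 S, ∀ ω,
      Y0 i s ω = ϱ s + f (if i = 1 then 1 else 0) (X i ω) + ε i s ω)
    (hFeq : ∀ i ∈ Finset.Icc 1 (J + 1), ∀ t ∈ Finset.Icc 1 T, ∀ ω,
      F i t ω = ρ t + g (if i = 1 then 1 else 0) (Z i ω) + ε' i t ω) :
    (∫ ω, (1 / (S : ℝ)) * ∑ s ∈ Finset.Icc 1 S, Y0 1 s ω)
        - (1 / (J : ℝ)) * ∑ i ∈ Finset.Icc 2 (J + 1),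
            ∫ ω, (1 / (S : ℝ)) * ∑ s ∈ Finset.Icc 1 S, Y0 i s ω
      = (∫ ω, (1 / (T : ℝ)) * ∑ t ∈ Finset.Icc 1 T, F 1 t ω)
        - (1 / (J : ℝ)) * ∑ i ∈ Finset.Icc 2 (J + 1),
            ∫ ω, (1 / (T : ℝ)) * ∑ t ∈ Finset.Icc 1 T, F i t ω := by
  have h1 : 1 ∈ Finset.Icc 1 (J + 1) := by simp
  have hX : ∀ i ∈ Finset.Icc 1 (J + 1), IdentDistrib (X i) (X 1) ℙ ℙ :=
    fun i hi => identDistrib_of_map_eq hXmeas hXlaw hi h1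
  have hZ : ∀ i ∈ Finset.Icc 1 (J + 1), IdentDistrib (Z i) (Z 1) ℙ ℙ :=
    fun i hi => identDistrib_of_map_eq hZmeas hZlaw hi h1
  rw [integral_average_treated_sub_control_eq hJ hS hfmeas hX hεint hεmean hf1int hf0int hY0eq,
    integral_average_treated_sub_control_eq hJ hT hgmeas hZ hε'int hε'mean hg1int hg0int hFeq]
  exact hmoment

/-- **Example 3.1.** If the potential outcomes and reference outcomes are generated by
the structural equations `Y⁽⁰⁾_{i,s} = ϱ_s + f(G_i, X_i) + ε_{i,s}` and
`F_{i,t} = ρ_t + g(G_i, Z_i) + ε'_{i,t}` with i.i.d. covariates, mean-zero noise, and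
`E[f(1,X₁) − f(0,X₁)] = E[g(1,Z₁) − g(0,Z₁)]`, then the linear equi-confounding
condition holds for the time-averaged outcomes. -/
theorem structural_model_implies_linear_equiconfounding
    {Ω : Type*} [MeasureSpace Ω] [IsProbabilityMeasure (ℙ : Measure Ω)]
    {𝒳 𝒵 : Type*} [MeasurableSpace 𝒳] [MeasurableSpace 𝒵]
    (J S T : ℕ) (hJ : 1 ≤ J) (hS : 1 ≤ S) (hT : 1 ≤ T)
    (X : ℕ → Ω → 𝒳) (Z : ℕ → Ω → 𝒵)
    (PX : Measure 𝒳) (PZ : Measure 𝒵)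
    (f : ℕ → 𝒳 → ℝ) (g : ℕ → 𝒵 → ℝ)
    (ϱ ρ : ℕ → ℝ)
    (ε ε' : ℕ → ℕ → Ω → ℝ)
    (Y0 F : ℕ → ℕ → Ω → ℝ)
    (hfmeas : ∀ b, Measurable (f b)) (hgmeas : ∀ b, Measurable (g b))
    (hXmeas : ∀ i ∈ Finset.Icc 1 (J + 1), Measurable (X i))
    (hZmeas : ∀ i ∈ Finset.Icc 1 (J + 1), Measurable (Z i))
    -- the covariates X₁, …, X_{J+1} are i.i.d. with common law P_X
    (hXindep : iIndepFun
      (fun i : (Finset.Icc 1 (J + 1) : Finset ℕ) => X (i : ℕ)) ℙ)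
    (hXlaw : ∀ i ∈ Finset.Icc 1 (J + 1), Measure.map (X i) ℙ = PX)
    -- the covariates Z₁, …, Z_{J+1} are i.i.d. with common law P_Z
    (hZindep : iIndepFun
      (fun i : (Finset.Icc 1 (J + 1) : Finset ℕ) => Z (i : ℕ)) ℙ)
    (hZlaw : ∀ i ∈ Finset.Icc 1 (J + 1), Measure.map (Z i) ℙ = PZ)
    -- mean-zero integrable noise
    (hεint : ∀ i ∈ Finset.Icc 1 (J + 1), ∀ s ∈ Finset.Icc 1 S, Integrable (ε i s) ℙ)
    (hεmean : ∀ i ∈ Finset.Icc 1 (J + 1), ∀ s ∈ Finset.Icc 1 S, ∫ ω, ε i s ω = 0)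
    (hε'int : ∀ i ∈ Finset.Icc 1 (J + 1), ∀ t ∈ Finset.Icc 1 T, Integrable (ε' i t) ℙ)
    (hε'mean : ∀ i ∈ Finset.Icc 1 (J + 1), ∀ t ∈ Finset.Icc 1 T, ∫ ω, ε' i t ω = 0)
    -- integrability of the structural terms
    (hf1int : Integrable (fun ω => f 1 (X 1 ω)) ℙ)
    (hf0int : Integrable (fun ω => f 0 (X 1 ω)) ℙ)
    (hg1int : Integrable (fun ω => g 1 (Z 1 ω)) ℙ)
    (hg0int : Integrable (fun ω => g 0 (Z 1 ω)) ℙ)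
    -- E[f(1, X₁) − f(0, X₁)] = E[g(1, Z₁) − g(0, Z₁)]
    (hmoment :
      (∫ ω, f 1 (X 1 ω)) - (∫ ω, f 0 (X 1 ω))
        = (∫ ω, g 1 (Z 1 ω)) - (∫ ω, g 0 (Z 1 ω)))
    -- structural equations, with G_i = 1 if i = 1 and G_i = 0 otherwise
    (hY0eq : ∀ i ∈ Finset.Icc 1 (J + 1), ∀ s ∈ Finset.Icc 1 S, ∀ ω,
      Y0 i s ω = ϱ s + f (if i = 1 then 1 else 0) (X i ω) + ε i s ω)
    (hFeq : ∀ i ∈ Finset.Icc 1 (J + 1), ∀ t ∈ Finset.Icc 1 T, ∀ ω,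
      F i t ω = ρ t + g (if i = 1 then 1 else 0) (Z i ω) + ε' i t ω) :
    (∫ ω, (1 / (S : ℝ)) * ∑ s ∈ Finset.Icc 1 S, Y0 1 s ω)
        - (1 / (J : ℝ)) * ∑ i ∈ Finset.Icc 2 (J + 1),
            ∫ ω, (1 / (S : ℝ)) * ∑ s ∈ Finset.Icc 1 S, Y0 i s ω
      = (∫ ω, (1 / (T : ℝ)) * ∑ t ∈ Finset.Icc 1 T, F 1 t ω)
        - (1 / (J : ℝ)) * ∑ i ∈ Finset.Icc 2 (J + 1),
            ∫ ω, (1 / (T : ℝ)) * ∑ t ∈ Finset.Icc 1 T, F i t ω :=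
  structural_model_implies_linear_equiconfounding_general J S T hJ hS hT X Z PX PZ f g ϱ ρ ε ε' Y0 F
    hfmeas hgmeas hXmeas hZmeas hXlaw hZlaw hεint hεmean hε'int hε'mean hf1int hf0int hg1int hg0int
    hmoment hY0eq hFeq
end

section
/- Let ψ₀ = E[Y₁] − E[Y₁⁽⁰⁾]. Assume consistency (Yᵢ = Yᵢ⁽⁰⁾ almost surely for each control unit i = 2, …, J+1), that E[Σ_{i=2}^{J+1} Fᵢ] ≠ 0 and E[Σ_{i=2}^{J+1} Yᵢ⁽⁰⁾] ≠ 0, and logarithmic equi-confounding: E[Y₁⁽⁰⁾] / E[Σ_{i=2}^{J+1} Yᵢ⁽⁰⁾] = E[F₁] / E[Σ_{i=2}^{J+1} Fᵢ]. Then ψ₀ = E[Y₁] − (E[F₁] / E[Σ_{i=2}^{J+1} Fᵢ]) · E[Σ_{i=2}^{J+1} Yᵢ]. -/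
open MeasureTheory ProbabilityTheory

/-- **Theorem 3.2 (logarithmic equi-confounding identification).**
Under consistency for the control units, nonvanishing control means, and the
logarithmic equi-confounding assumption, the causal parameter
`ψ₀ = E[Y₁] − E[Y₁⁽⁰⁾]` is identified as
`E[Y₁] − (E[F₁]/E[Σ_{i=2}^{J+1} Fᵢ]) · E[Σ_{i=2}^{J+1} Yᵢ]`. -/
theorem log_equiconfounding_identification
    {Ω : Type*} [MeasureSpace Ω] [IsProbabilityMeasure (ℙ : Measure Ω)]
    (J : ℕ) (hJ : 1 ≤ J)
    (Y Y0 F : ℕ → Ω → ℝ)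
    (hYint : ∀ i ∈ Finset.Icc 1 (J + 1), Integrable (Y i) ℙ)
    (hY0int : ∀ i ∈ Finset.Icc 1 (J + 1), Integrable (Y0 i) ℙ)
    (hFint : ∀ i ∈ Finset.Icc 1 (J + 1), Integrable (F i) ℙ)
    (hcons : ∀ i ∈ Finset.Icc 2 (J + 1), Y i =ᵐ[ℙ] Y0 i)
    (hFne : (∫ ω, ∑ i ∈ Finset.Icc 2 (J + 1), F i ω) ≠ 0)
    (hY0ne : (∫ ω, ∑ i ∈ Finset.Icc 2 (J + 1), Y0 i ω) ≠ 0)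
    (hlogequi :
      (∫ ω, Y0 1 ω) / (∫ ω, ∑ i ∈ Finset.Icc 2 (J + 1), Y0 i ω)
        = (∫ ω, F 1 ω) / (∫ ω, ∑ i ∈ Finset.Icc 2 (J + 1), F i ω)) :
    (∫ ω, Y 1 ω) - (∫ ω, Y0 1 ω)
      = (∫ ω, Y 1 ω)
        - ((∫ ω, F 1 ω) / (∫ ω, ∑ i ∈ Finset.Icc 2 (J + 1), F i ω))
            * (∫ ω, ∑ i ∈ Finset.Icc 2 (J + 1), Y i ω) := by
  have hsum : (∫ ω, ∑ i ∈ Finset.Icc 2 (J + 1), Y i ω)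
      = ∫ ω, ∑ i ∈ Finset.Icc 2 (J + 1), Y0 i ω := by
    refine integral_congr_ae ?_
    have : ∀ᵐ ω ∂(ℙ : Measure Ω), ∀ i ∈ Finset.Icc 2 (J + 1), Y i ω = Y0 i ω :=
      (ae_ball_iff (Finset.countable_toSet _)).2 hcons
    filter_upwards [this] with ω h
    exact Finset.sum_congr rfl h
  rw [hsum]
  have : (∫ ω, Y0 1 ω)
      = (∫ ω, F 1 ω) / (∫ ω, ∑ i ∈ Finset.Icc 2 (J + 1), F i ω)
        * (∫ ω, ∑ i ∈ Finset.Icc 2 (J + 1), Y0 i ω) := by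
    rw [← hlogequi, div_mul_cancel₀ _ hY0ne]
  rw [this]
end

section
/- Let ψ₀ = E[Y₁] − E[Y₁⁽⁰⁾] and define the estimator ψ̂ᵉᑫ² = Y₁ − (F₁ / Σ_{i=2}^{J+1} Fᵢ) · Σ_{i=2}^{J+1} Yᵢ. Assume: (i) consistency (Yᵢ = Yᵢ⁽⁰⁾ almost surely for i = 2, …, J+1); (ii) logarithmic equi-confounding: E[Y₁⁽⁰⁾] / E[Σ_{i=2}^{J+1} Yᵢ⁽⁰⁾] = E[F₁] / E[Σ_{i=2}^{J+1} Fᵢ]; (iii) boundedness: for all i, Yᵢ⁽⁰⁾ ∈ [l_y, L_y] and Fᵢ ∈ [l_f, L_f] almost surely with 0 < l_y and 0 < l_f; (iv) weak dependence among controls: (1/J²)·Σ_{i ≠ j, 2 ≤ i,j ≤ J+1} |Cov(Fᵢ, Fⱼ)| ≤ τ for a constant τ ≥ 0; (v) |Cov(F₁ / ((1/J)·Σ_{i=2}^{J+1} Fᵢ), (1/J)·Σ_{i=2}^{J+1} Yᵢ)| ≤ C for a constant C ≥ 0. Let Δ_f = L_f − l_f. Then |E[ψ̂ᵉᑫ²]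 − ψ₀| ≤ L_y · ( Δ_f²/(4·l_f²) · 1/√J + Δ_f/(2·l_f²) · √τ + (L_f/l_f³) · (Δ_f²/(4J) + τ) ) + C. -/
/-!
Write `f = F₁`, `S = Σ_{i ≥ 2} Fᵢ`, `T = Σ_{i ≥ 2} Yᵢ`. Consistency and equi-confounding identify
`E[Y₁⁽⁰⁾]` with `E f / E S · E T`, so the bias is `E[f T / S] − E f / E S · E T`, which equals
`Cov(f/S, T) + (E[f/S] − E f / E S) · E T`. The covariance is the assumed one, rescaled by `J`.
For the second term expand `1/S` exactly to second order around `m = E S`: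
`1/S = 1/m − (S − m)/m² + (S − m)²/(S m²)`. The linear term contributes `E[f (S − m)]/m²`, at
most `Δ_f/2 · E|S − m| / m² ≤ Δ_f/2 · √Var S / m²`; the remainder is at most
`L_f/(J l_f) · Var S / m²`. Popoviciu's inequality on the diagonal and weak dependence off it give
`Var S ≤ J Δ_f²/4 + J² τ`, and `m ≥ J l_f`.
-/

open MeasureTheory ProbabilityTheory

/-- Covariance of two real random variables: `Cov(U, V) = E[UV] − E[U]·E[V]`. -/
noncomputable def covar {Ω : Type*} [MeasureSpace Ω] (U V : Ω → ℝ) : ℝ :=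
  (∫ ω, U ω * V ω) - (∫ ω, U ω) * (∫ ω, V ω)

/-- Variance of a real random variable: `Var(U) = Cov(U, U)`. -/
noncomputable def var {Ω : Type*} [MeasureSpace Ω] (U : Ω → ℝ) : ℝ := covar U U

section Moments
variable {Ω : Type*} {mΩ : MeasurableSpace Ω} {μ : Measure Ω}

lemma integral_abs_sub_integral_le_sqrt_variance [IsProbabilityMeasure μ] {X : Ω → ℝ}
    (hX : MemLp X 2 μ) : ∫ ω, |X ω - μ[X]| ∂μ ≤ √(Var[X; μ]) := by
  have hD : MemLp (fun ω => |X ω - μ[X]|) 2 μ := (hX.sub (memLp_const _)).abs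
  have hsq : ∫ ω, ((fun ω => |X ω - μ[X]|) ^ 2) ω ∂μ = Var[X; μ] := by
    simp only [Pi.pow_apply, sq_abs]
    exact (variance_eq_integral hX.aemeasurable).symm
  apply Real.le_sqrt_of_sq_le
  have := variance_nonneg (fun ω => |X ω - μ[X]|) μ
  rw [variance_eq_sub hD, hsq] at this
  linarith

lemma integral_mul_sub_integral_eq_integral_sub_mul [IsProbabilityMeasure μ] {f S : Ω → ℝ} (c : ℝ)
    (hf : Integrable (fun ω => f ω * (S ω - μ[S])) μ) (hS : Integrable S μ) :
    ∫ ω, f ω * (S ω - μ[S]) ∂μ = ∫ ω, (f ω - c) * (S ω - μ[S]) ∂μ := by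
  have hSc : Integrable (fun ω => c * (S ω - μ[S])) μ := (hS.sub (integrable_const _)).const_mul c
  have hzero : ∫ ω, c * (S ω - μ[S]) ∂μ = 0 := by
    rw [integral_const_mul, integral_sub hS (integrable_const _)]
    simp
  simp_rw [sub_mul]
  rw [integral_sub hf hSc, hzero, sub_zero]

lemma abs_integral_mul_sub_integral_le [IsProbabilityMeasure μ] {a b : ℝ} {f S : Ω → ℝ}
    (hf : ∀ᵐ ω ∂μ, f ω ∈ Set.Icc a b) (hfm : AEStronglyMeasurable f μ) (hS : MemLp S 2 μ) :
    |∫ ω, f ω * (S ω - μ[S]) ∂μ| ≤ (b - a) / 2 * √(Var[S; μ]) := by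
  have hab : a ≤ b := by
    obtain ⟨_, h⟩ := hf.exists
    exact h.1.trans h.2
  have hSc : Integrable (fun ω => S ω - μ[S]) μ :=
    (hS.integrable one_le_two).sub (integrable_const _)
  have hfS : Integrable (fun ω => f ω * (S ω - μ[S])) μ :=
    hSc.bdd_mul (c := max |a| |b|) hfm (hf.mono fun _ h => abs_le_max_abs_abs h.1 h.2)
  have hdev : ∀ᵐ ω ∂μ,
      ‖(f ω - (a + b) / 2) * (S ω - μ[S])‖ ≤ (b - a) / 2 * |S ω - μ[S]| := by
    filter_upwards [hf] with ω hω
    rw [Real.norm_eq_abs, abs_mul]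
    gcongr
    rw [abs_le]
    constructor <;> linarith [hω.1, hω.2]
  calc |∫ ω, f ω * (S ω - μ[S]) ∂μ|
      = ‖∫ ω, (f ω - (a + b) / 2) * (S ω - μ[S]) ∂μ‖ := by
        rw [integral_mul_sub_integral_eq_integral_sub_mul _ hfS (hS.integrable one_le_two),
          Real.norm_eq_abs]
    _ ≤ ∫ ω, (b - a) / 2 * |S ω - μ[S]| ∂μ :=
        norm_integral_le_of_norm_le (hSc.abs.const_mul _) hdev
    _ = (b - a) / 2 * ∫ ω, |S ω - μ[S]| ∂μ := integral_const_mul _ _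
    _ ≤ (b - a) / 2 * √(Var[S; μ]) :=
        mul_le_mul_of_nonneg_left (integral_abs_sub_integral_le_sqrt_variance hS) (by linarith)

end Moments

lemma div_eq_div_sub_add_sq {x y c : ℝ} (hy : y ≠ 0) (hc : c ≠ 0) :
    x / y = x / c - x * (y - c) / c ^ 2 + x * (y - c) ^ 2 / (y * c ^ 2) := by
  field_simp
  ring

lemma mul_sq_div_mem_Icc {x y b s c : ℝ} (hx : 0 ≤ x) (hxb : x ≤ b) (hs : 0 < s) (hsy : s ≤ y)
    (hc : 0 < c) : x * (y - c) ^ 2 / (y * c ^ 2) ∈ Set.Icc 0 (b / s / c ^ 2 * (y - c) ^ 2) := by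
  have hy : 0 < y := hs.trans_le hsy
  refine ⟨by positivity, ?_⟩
  calc x * (y - c) ^ 2 / (y * c ^ 2) ≤ b * (y - c) ^ 2 / (s * c ^ 2) := by
        gcongr
        exact mul_nonneg (hx.trans hxb) (sq_nonneg _)
    _ = b / s / c ^ 2 * (y - c) ^ 2 := by ring

section Ratio
variable {Ω : Type*} {mΩ : MeasurableSpace Ω} {μ : Measure Ω}

lemma integral_div_sub_div_integral {f S : Ω → ℝ} (hf : Integrable f μ)
    (hfS : Integrable (fun ω => f ω * (S ω - μ[S])) μ)
    (hR : Integrable (fun ω => f ω * (S ω - μ[S]) ^ 2 / (S ω * μ[S] ^ 2)) μ)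
    (hS : ∀ᵐ ω ∂μ, S ω ≠ 0) (hm : μ[S] ≠ 0) :
    ∫ ω, f ω / S ω ∂μ - μ[f] / μ[S]
      = ∫ ω, f ω * (S ω - μ[S]) ^ 2 / (S ω * μ[S] ^ 2) ∂μ
        - (∫ ω, f ω * (S ω - μ[S]) ∂μ) / μ[S] ^ 2 := by
  have hlin : Integrable (fun ω => f ω / μ[S] - f ω * (S ω - μ[S]) / μ[S] ^ 2) μ :=
    (hf.div_const _).sub (hfS.div_const _)
  rw [integral_congr_ae (hS.mono fun ω h => div_eq_div_sub_add_sq h hm), integral_add hlin hR,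
    integral_sub (hf.div_const _) (hfS.div_const _), integral_div, integral_div]
  ring

lemma abs_integral_div_sub_div_integral_le [IsProbabilityMeasure μ] {a b s : ℝ} {f S : Ω → ℝ}
    (ha : 0 ≤ a) (hs : 0 < s) (hf : ∀ᵐ ω ∂μ, f ω ∈ Set.Icc a b)
    (hfm : AEStronglyMeasurable f μ) (hS : MemLp S 2 μ) (hSs : ∀ᵐ ω ∂μ, s ≤ S ω) :
    |∫ ω, f ω / S ω ∂μ - μ[f] / μ[S]| ≤
      ((b - a) / 2 * √(Var[S; μ]) + b / s * Var[S; μ]) / s ^ 2 := by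
  obtain ⟨hab, hb⟩ : a ≤ b ∧ 0 ≤ b := by
    obtain ⟨_, h⟩ := hf.exists
    exact ⟨h.1.trans h.2, ha.trans (h.1.trans h.2)⟩
  set m := μ[S]
  have hsm : s ≤ m := by
    simpa using integral_mono_ae (integrable_const s) (hS.integrable one_le_two) hSs
  have hm : 0 < m := hs.trans_le hsm
  let R : Ω → ℝ := fun ω => f ω * (S ω - m) ^ 2 / (S ω * m ^ 2)
  have hR : ∀ᵐ ω ∂μ, R ω ∈ Set.Icc 0 (b / s / m ^ 2 * (S ω - m) ^ 2) := by
    filter_upwards [hf, hSs] with ω hfω hSω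
    exact mul_sq_div_mem_Icc (ha.trans hfω.1) hfω.2 hs hSω hm
  have hfb : ∀ᵐ ω ∂μ, ‖f ω‖ ≤ b := hf.mono fun _ h => by
    rw [Real.norm_eq_abs, abs_of_nonneg (ha.trans h.1)]; exact h.2
  have hfi : Integrable f μ := (integrable_const b).mono' hfm hfb
  have hfS : Integrable (fun ω => f ω * (S ω - m)) μ :=
    ((hS.integrable one_le_two).sub (integrable_const _)).bdd_mul hfm hfb
  have hsq : Integrable (fun ω => b / s / m ^ 2 * (S ω - m) ^ 2) μ :=
    (hS.sub (memLp_const m)).integrable_sq.const_mul _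
  have hRi : Integrable R μ := by
    refine hsq.mono' ?_ (hR.mono fun _ h => by rw [Real.norm_eq_abs, abs_of_nonneg h.1]; exact h.2)
    exact (hfm.aemeasurable.mul ((hS.aemeasurable.sub_const m).pow_const 2)).div
      (hS.aemeasurable.mul_const _) |>.aestronglyMeasurable
  have hRint : ∫ ω, R ω ∂μ ≤ b / s / m ^ 2 * Var[S; μ] := by
    rw [variance_eq_integral hS.aemeasurable, ← integral_const_mul]
    exact integral_mono_ae hRi hsq (hR.mono fun _ h => h.2)
  calc |∫ ω, f ω / S ω ∂μ - μ[f] / m|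
      ≤ |∫ ω, R ω ∂μ| + |∫ ω, f ω * (S ω - m) ∂μ| / m ^ 2 := by
        rw [integral_div_sub_div_integral hfi hfS hRi
          (hSs.mono fun _ h => (hs.trans_le h).ne') hm.ne']
        exact (abs_sub _ _).trans_eq (by rw [abs_div, abs_of_pos (pow_pos hm 2)])
    _ ≤ b / s / m ^ 2 * Var[S; μ] + (b - a) / 2 * √(Var[S; μ]) / m ^ 2 := by
        rw [abs_of_nonneg (integral_nonneg_of_ae (hR.mono fun _ h => h.1))]
        gcongr
        exact abs_integral_mul_sub_integral_le hf hfm hS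
    _ = ((b - a) / 2 * √(Var[S; μ]) + b / s * Var[S; μ]) / m ^ 2 := by ring
    _ ≤ ((b - a) / 2 * √(Var[S; μ]) + b / s * Var[S; μ]) / s ^ 2 := by
        gcongr
        exact add_nonneg (mul_nonneg (by linarith) (Real.sqrt_nonneg _))
          (mul_nonneg (by positivity) (variance_nonneg _ _))

end Ratio

section Sums
variable {Ω : Type*} {mΩ : MeasurableSpace Ω} {μ : Measure Ω} {ι : Type*} {s : Finset ι}
  {X : ι → Ω → ℝ} {a b : ℝ}

lemma ae_sum_mem_Icc (hX : ∀ i ∈ s, ∀ᵐ ω ∂μ, X i ω ∈ Set.Icc a b) :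
    ∀ᵐ ω ∂μ, ∑ i ∈ s, X i ω ∈ Set.Icc (s.card * a) (s.card * b) := by
  filter_upwards [(Filter.eventually_all_finset s).2 hX] with ω hω
  simp only [← nsmul_eq_mul]
  exact ⟨Finset.card_nsmul_le_sum _ _ _ fun i hi => (hω i hi).1,
    Finset.sum_le_card_nsmul _ _ _ fun i hi => (hω i hi).2⟩

lemma variance_sum_le_of_bounded [IsProbabilityMeasure μ] [DecidableEq ι]
    (hX : ∀ i ∈ s, ∀ᵐ ω ∂μ, X i ω ∈ Set.Icc a b) (hXm : ∀ i ∈ s, AEStronglyMeasurable (X i) μ) :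
    Var[fun ω => ∑ i ∈ s, X i ω; μ]
      ≤ s.card * ((b - a) / 2) ^ 2 + ∑ i ∈ s, ∑ j ∈ s.erase i, |cov[X i, X j; μ]| := by
  rw [variance_fun_sum' fun i hi => memLp_of_bounded (hX i hi) (hXm i hi) 2]
  calc ∑ i ∈ s, ∑ j ∈ s, cov[X i, X j; μ]
      = ∑ i ∈ s, (Var[X i; μ] + ∑ j ∈ s.erase i, cov[X i, X j; μ]) :=
        Finset.sum_congr rfl fun i hi => by
          rw [← Finset.add_sum_erase _ _ hi, covariance_self (hXm i hi).aemeasurable]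
    _ ≤ ∑ i ∈ s, (((b - a) / 2) ^ 2 + ∑ j ∈ s.erase i, |cov[X i, X j; μ]|) :=
        Finset.sum_le_sum fun i hi => add_le_add
          (variance_le_sq_of_bounded (hX i hi) (hXm i hi).aemeasurable)
          (Finset.sum_le_sum fun _ _ => le_abs_self _)
    _ = s.card * ((b - a) / 2) ^ 2 + ∑ i ∈ s, ∑ j ∈ s.erase i, |cov[X i, X j; μ]| := by
        rw [Finset.sum_add_distrib, Finset.sum_const, nsmul_eq_mul]

end Sums

section Covar
variable {Ω : Type*} [MeasureSpace Ω]

lemma covar_eq_covariance [IsProbabilityMeasure (ℙ : Measure Ω)] {U V : Ω → ℝ}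
    (hU : MemLp U 2) (hV : MemLp V 2) : covar U V = cov[U, V] :=
  (covariance_eq_sub hU hV).symm

lemma covar_const_mul_const_mul (c d : ℝ) (U V : Ω → ℝ) :
    covar (fun ω => c * U ω) (fun ω => d * V ω) = c * d * covar U V := by
  have h : ∀ ω, c * U ω * (d * V ω) = c * d * (U ω * V ω) := fun ω => by ring
  simp only [covar, h, integral_const_mul]
  ring

lemma covar_div_const_mul_const_mul {c : ℝ} (hc : c ≠ 0) (f S T : Ω → ℝ) :
    covar (fun ω => f ω / (c * S ω)) (fun ω => c * T ω) = covar (fun ω => f ω / S ω) T := by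
  have h : (fun ω => f ω / (c * S ω)) = fun ω => c⁻¹ * (f ω / S ω) :=
    funext fun ω => by rw [div_mul_eq_div_div_swap, div_eq_inv_mul]
  rw [h, covar_const_mul_const_mul, inv_mul_cancel₀ hc, one_mul]

lemma variance_sum_le_of_weak_dependence [IsProbabilityMeasure (ℙ : Measure Ω)] {ι : Type*}
    [DecidableEq ι] {s : Finset ι} {X : ι → Ω → ℝ} {a b τ : ℝ} (hs : s.Nonempty)
    (hX : ∀ i ∈ s, ∀ᵐ ω, X i ω ∈ Set.Icc a b) (hXm : ∀ i ∈ s, AEStronglyMeasurable (X i))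
    (hweak : 1 / (s.card : ℝ) ^ 2 * ∑ i ∈ s, ∑ j ∈ s.erase i, |covar (X i) (X j)| ≤ τ) :
    Var[fun ω => ∑ i ∈ s, X i ω] ≤ s.card * ((b - a) / 2) ^ 2 + s.card ^ 2 * τ := by
  have hL2 i (hi : i ∈ s) : MemLp (X i) 2 := memLp_of_bounded (hX i hi) (hXm i hi) 2
  refine (variance_sum_le_of_bounded hX hXm).trans (add_le_add le_rfl ?_)
  rw [one_div, inv_mul_le_iff₀ (by positivity)] at hweak
  refine le_of_eq_of_le (Finset.sum_congr rfl fun i hi => Finset.sum_congr rfl fun j hj => ?_) hweak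
  rw [covar_eq_covariance (hL2 i hi) (hL2 j (Finset.mem_of_mem_erase hj))]

lemma abs_integral_div_mul_sub_le [IsProbabilityMeasure (ℙ : Measure Ω)] {a b s K : ℝ}
    {f S T : Ω → ℝ} (ha : 0 ≤ a) (hs : 0 < s) (hf : ∀ᵐ ω, f ω ∈ Set.Icc a b)
    (hfm : AEStronglyMeasurable f) (hS : MemLp S 2) (hSs : ∀ᵐ ω, s ≤ S ω)
    (hT : |∫ ω, T ω| ≤ K) :
    |(∫ ω, f ω / S ω * T ω) - (∫ ω, f ω) / (∫ ω, S ω) * ∫ ω, T ω|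
      ≤ |covar (fun ω => f ω / S ω) T|
        + ((b - a) / 2 * √(Var[S]) + b / s * Var[S]) / s ^ 2 * K := by
  have h : (∫ ω, f ω / S ω * T ω) - (∫ ω, f ω) / (∫ ω, S ω) * ∫ ω, T ω
      = covar (fun ω => f ω / S ω) T
        + ((∫ ω, f ω / S ω) - (∫ ω, f ω) / ∫ ω, S ω) * ∫ ω, T ω := by
    simp only [covar]
    ring
  have hratio := abs_integral_div_sub_div_integral_le ha hs hf hfm hS hSs
  rw [h]
  refine (abs_add_le _ _).trans (add_le_add le_rfl ?_)
  rw [abs_mul]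
  exact mul_le_mul hratio hT (abs_nonneg _) ((abs_nonneg _).trans hratio)

lemma abs_integral_sub_div_mul_sub_le [IsProbabilityMeasure (ℙ : Measure Ω)] {a b s K : ℝ}
    {Y f S T : Ω → ℝ} (hY : Integrable Y) (hT : Integrable T) (ha : 0 ≤ a) (hs : 0 < s)
    (hf : ∀ᵐ ω, f ω ∈ Set.Icc a b) (hfm : AEStronglyMeasurable f) (hS : MemLp S 2)
    (hSs : ∀ᵐ ω, s ≤ S ω) (hTK : |∫ ω, T ω| ≤ K) :
    |(∫ ω, (Y ω - f ω / S ω * T ω)) - ((∫ ω, Y ω) - (∫ ω, f ω) / (∫ ω, S ω) * ∫ ω, T ω)|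
      ≤ |covar (fun ω => f ω / S ω) T|
        + ((b - a) / 2 * √(Var[S]) + b / s * Var[S]) / s ^ 2 * K := by
  have hfS : ∀ᵐ ω, ‖f ω / S ω‖ ≤ b / s := by
    filter_upwards [hf, hSs] with ω hfω hSω
    rw [norm_div, Real.norm_of_nonneg (ha.trans hfω.1), Real.norm_of_nonneg (hs.le.trans hSω)]
    exact div_le_div₀ (ha.trans (hfω.1.trans hfω.2)) hfω.2 hs hSω
  have hfST : Integrable (fun ω => f ω / S ω * T ω) :=
    hT.bdd_mul (hfm.aemeasurable.div hS.aemeasurable).aestronglyMeasurable hfS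
  rw [integral_sub hY hfST, sub_sub_sub_cancel_left, abs_sub_comm]
  exact abs_integral_div_mul_sub_le ha hs hf hfm hS hSs hTK

end Covar

lemma ratio_bias_bound_le {J lf Lf Ly τ V : ℝ} (hJ : 0 < J) (hlf : 0 < lf) (hlL : lf ≤ Lf)
    (hLy : 0 ≤ Ly) (hτ : 0 ≤ τ) (hV : V ≤ J * ((Lf - lf) / 2) ^ 2 + J ^ 2 * τ) :
    ((Lf - lf) / 2 * √V + Lf / (J * lf) * V) / (J * lf) ^ 2 * (J * Ly)
      ≤ Ly * ((Lf - lf) ^ 2 / (4 * lf ^ 2) * (1 / √J) + (Lf - lf) / (2 * lf ^ 2) * √τ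
        + Lf / lf ^ 3 * ((Lf - lf) ^ 2 / (4 * J) + τ)) := by
  have hΔ : 0 ≤ (Lf - lf) / 2 := by linarith
  have hsqrtV : √V ≤ (Lf - lf) / 2 * √J + J * √τ := by
    rw [Real.sqrt_le_left (by positivity)]
    calc V ≤ J * ((Lf - lf) / 2) ^ 2 + J ^ 2 * τ := hV
      _ ≤ J * ((Lf - lf) / 2) ^ 2 + J ^ 2 * τ + 2 * ((Lf - lf) / 2 * √J) * (J * √τ) := by
        have : 0 ≤ (Lf - lf) / 2 * √J * (J * √τ) := by positivity
        linarith
      _ = ((Lf - lf) / 2 * √J + J * √τ) ^ 2 := by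
        rw [add_sq, mul_pow, mul_pow, Real.sq_sqrt hJ.le, Real.sq_sqrt hτ]
        ring
  calc ((Lf - lf) / 2 * √V + Lf / (J * lf) * V) / (J * lf) ^ 2 * (J * Ly)
      ≤ ((Lf - lf) / 2 * ((Lf - lf) / 2 * √J + J * √τ)
          + Lf / (J * lf) * (J * ((Lf - lf) / 2) ^ 2 + J ^ 2 * τ)) / (J * lf) ^ 2 * (J * Ly) := by
        have : 0 ≤ Lf / (J * lf) := div_nonneg (by linarith) (by positivity)
        gcongr
    _ = Ly * ((Lf - lf) ^ 2 / (4 * lf ^ 2) * (1 / √J) + (Lf - lf) / (2 * lf ^ 2) * √τ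
        + Lf / lf ^ 3 * ((Lf - lf) ^ 2 / (4 * J) + τ)) := by
        obtain ⟨r, hr, rfl⟩ : ∃ r, 0 < r ∧ J = r ^ 2 :=
          ⟨√J, Real.sqrt_pos.2 hJ, (Real.sq_sqrt hJ.le).symm⟩
        rw [Real.sqrt_sq hr.le]
        field_simp
        ring

theorem log_equiconfounding_bias_bound_general
    {Ω : Type*} [MeasureSpace Ω] [IsProbabilityMeasure (ℙ : Measure Ω)]
    (J : ℕ) (hJ : 1 ≤ J)
    (Y Y0 F : ℕ → Ω → ℝ)
    (hYint : ∀ i ∈ Finset.Icc 1 (J + 1), Integrable (Y i) ℙ)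
    (hFint : ∀ i ∈ Finset.Icc 1 (J + 1), Integrable (F i) ℙ)
    -- (i) consistency
    (hcons : ∀ i ∈ Finset.Icc 2 (J + 1), Y i =ᵐ[ℙ] Y0 i)
    -- (ii) logarithmic equi-confounding
    (hlogequi :
      (∫ ω, Y0 1 ω) / (∫ ω, ∑ i ∈ Finset.Icc 2 (J + 1), Y0 i ω)
        = (∫ ω, F 1 ω) / (∫ ω, ∑ i ∈ Finset.Icc 2 (J + 1), F i ω))
    -- (iii) boundedness
    (ly Ly lf Lf : ℝ) (hly : 0 < ly) (hlf : 0 < lf)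
    (hY0bdd : ∀ i ∈ Finset.Icc 1 (J + 1), ∀ᵐ ω ∂ℙ, Y0 i ω ∈ Set.Icc ly Ly)
    (hFbdd : ∀ i ∈ Finset.Icc 1 (J + 1), ∀ᵐ ω ∂ℙ, F i ω ∈ Set.Icc lf Lf)
    -- (iv) weak dependence among controls
    (τ : ℝ) (hτ : 0 ≤ τ)
    (hweak : (1 / (J : ℝ) ^ 2) *
        ∑ i ∈ Finset.Icc 2 (J + 1), ∑ j ∈ (Finset.Icc 2 (J + 1)).erase i,
          |covar (F i) (F j)| ≤ τ)
    -- (v) covariance condition on the ratio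
    (C : ℝ)
    (hcov : |covar (fun ω => F 1 ω / ((1 / (J : ℝ)) * ∑ i ∈ Finset.Icc 2 (J + 1), F i ω))
        (fun ω => (1 / (J : ℝ)) * ∑ i ∈ Finset.Icc 2 (J + 1), Y i ω)| ≤ C) :
    |(∫ ω, (Y 1 ω - F 1 ω / (∑ i ∈ Finset.Icc 2 (J + 1), F i ω)
          * ∑ i ∈ Finset.Icc 2 (J + 1), Y i ω))
        - ((∫ ω, Y 1 ω) - ∫ ω, Y0 1 ω)|
      ≤ Ly * ((Lf - lf) ^ 2 / (4 * lf ^ 2) * (1 / Real.sqrt J)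
          + (Lf - lf) / (2 * lf ^ 2) * Real.sqrt τ
          + Lf / lf ^ 3 * ((Lf - lf) ^ 2 / (4 * J) + τ)) + C := by
  have hJ0 : (0 : ℝ) < J := by exact_mod_cast hJ
  have hsub : Finset.Icc 2 (J + 1) ⊆ Finset.Icc 1 (J + 1) := Finset.Icc_subset_Icc_left one_le_two
  have h1 : 1 ∈ Finset.Icc 1 (J + 1) := by simp
  have hcard : ((Finset.Icc 2 (J + 1)).card : ℝ) = J := by simp
  obtain ⟨hlL, hlyL⟩ : lf ≤ Lf ∧ ly ≤ Ly := by
    obtain ⟨_, hF, hY⟩ := ((hFbdd 1 h1).and (hY0bdd 1 h1)).exists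
    exact ⟨hF.1.trans hF.2, hY.1.trans hY.2⟩
  have hS := ae_sum_mem_Icc fun i hi => hFbdd i (hsub hi)
  have hT := ae_sum_mem_Icc (X := Y) fun i hi =>
    (hcons i hi).mp ((hY0bdd i (hsub hi)).mono fun _ h he => he ▸ h)
  rw [hcard] at hS hT
  have hSint := integrable_finsetSum _ fun i hi => hFint i (hsub hi)
  have hTint := integrable_finsetSum _ fun i hi => hYint i (hsub hi)
  have hET := (convex_Icc _ _).integral_mem isClosed_Icc hT hTint
  have hY0 : ∫ ω, Y0 1 ω = (∫ ω, F 1 ω) / (∫ ω, ∑ i ∈ Finset.Icc 2 (J + 1), F i ω)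
      * ∫ ω, ∑ i ∈ Finset.Icc 2 (J + 1), Y i ω := by
    have hYY0 : ∫ ω, ∑ i ∈ Finset.Icc 2 (J + 1), Y i ω
        = ∫ ω, ∑ i ∈ Finset.Icc 2 (J + 1), Y0 i ω := integral_congr_ae <|
      ((Filter.eventually_all_finset _).2 hcons).mono fun _ h => Finset.sum_congr rfl h
    rw [hYY0] at hET ⊢
    exact (div_eq_iff ((mul_pos hJ0 hly).trans_le hET.1).ne').1 hlogequi
  rw [covar_div_const_mul_const_mul (by positivity)] at hcov
  have hV := variance_sum_le_of_weak_dependence (τ := τ) (Finset.nonempty_Icc.2 (by omega))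
    (fun i hi => hFbdd i (hsub hi))
    (fun i hi => (hFint i (hsub hi)).aestronglyMeasurable) (by rwa [hcard])
  rw [hcard] at hV
  rw [hY0]
  refine (abs_integral_sub_div_mul_sub_le (hYint 1 h1) hTint hlf.le (mul_pos hJ0 hlf) (hFbdd 1 h1)
    (hFint 1 h1).aestronglyMeasurable (memLp_of_bounded hS hSint.aestronglyMeasurable 2)
    (hS.mono fun _ h => h.1) (abs_le.2 ⟨by nlinarith [hET.1], hET.2⟩)).trans ?_
  linarith [ratio_bias_bound_le hJ0 hlf hlL (hly.le.trans hlyL) hτ hV]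

/-- **Theorem 3.3 (bias bound for the logarithmic equi-confounding estimator).**
Under consistency, logarithmic equi-confounding, boundedness, weak dependence among
controls, and the covariance condition, the absolute bias of
`ψ̂ᵉᑫ² = Y₁ − (F₁/Σ_{i=2}^{J+1} Fᵢ)·Σ_{i=2}^{J+1} Yᵢ` for `ψ₀ = E[Y₁] − E[Y₁⁽⁰⁾]`
is bounded by
`L_y·(Δ_f²/(4l_f²)·1/√J + Δ_f/(2l_f²)·√τ + (L_f/l_f³)·(Δ_f²/(4J) + τ)) + C`. -/
theorem log_equiconfounding_bias_bound
    {Ω : Type*} [MeasureSpace Ω] [IsProbabilityMeasure (ℙ : Measure Ω)]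
    (J : ℕ) (hJ : 1 ≤ J)
    (Y Y0 F : ℕ → Ω → ℝ)
    (hYint : ∀ i ∈ Finset.Icc 1 (J + 1), Integrable (Y i) ℙ)
    (hY0int : ∀ i ∈ Finset.Icc 1 (J + 1), Integrable (Y0 i) ℙ)
    (hFint : ∀ i ∈ Finset.Icc 1 (J + 1), Integrable (F i) ℙ)
    (hYmeas : ∀ i ∈ Finset.Icc 1 (J + 1), Measurable (Y i))
    (hFmeas : ∀ i ∈ Finset.Icc 1 (J + 1), Measurable (F i))
    -- (i) consistency
    (hcons : ∀ i ∈ Finset.Icc 2 (J + 1), Y i =ᵐ[ℙ] Y0 i)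
    -- (ii) logarithmic equi-confounding
    (hlogequi :
      (∫ ω, Y0 1 ω) / (∫ ω, ∑ i ∈ Finset.Icc 2 (J + 1), Y0 i ω)
        = (∫ ω, F 1 ω) / (∫ ω, ∑ i ∈ Finset.Icc 2 (J + 1), F i ω))
    -- (iii) boundedness
    (ly Ly lf Lf : ℝ) (hly : 0 < ly) (hlf : 0 < lf)
    (hY0bdd : ∀ i ∈ Finset.Icc 1 (J + 1), ∀ᵐ ω ∂ℙ, Y0 i ω ∈ Set.Icc ly Ly)
    (hFbdd : ∀ i ∈ Finset.Icc 1 (J + 1), ∀ᵐ ω ∂ℙ, F i ω ∈ Set.Icc lf Lf)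
    -- (iv) weak dependence among controls
    (τ : ℝ) (hτ : 0 ≤ τ)
    (hweak : (1 / (J : ℝ) ^ 2) *
        ∑ i ∈ Finset.Icc 2 (J + 1), ∑ j ∈ (Finset.Icc 2 (J + 1)).erase i,
          |covar (F i) (F j)| ≤ τ)
    -- (v) covariance condition on the ratio
    (C : ℝ) (hC : 0 ≤ C)
    (hcov : |covar (fun ω => F 1 ω / ((1 / (J : ℝ)) * ∑ i ∈ Finset.Icc 2 (J + 1), F i ω))
        (fun ω => (1 / (J : ℝ)) * ∑ i ∈ Finset.Icc 2 (J + 1), Y i ω)| ≤ C) :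
    |(∫ ω, (Y 1 ω - F 1 ω / (∑ i ∈ Finset.Icc 2 (J + 1), F i ω)
          * ∑ i ∈ Finset.Icc 2 (J + 1), Y i ω))
        - ((∫ ω, Y 1 ω) - ∫ ω, Y0 1 ω)|
      ≤ Ly * ((Lf - lf) ^ 2 / (4 * lf ^ 2) * (1 / Real.sqrt J)
          + (Lf - lf) / (2 * lf ^ 2) * Real.sqrt τ
          + Lf / lf ^ 3 * ((Lf - lf) ^ 2 / (4 * J) + τ)) + C :=
  log_equiconfounding_bias_bound_general J hJ Y Y0 F hYint hFint hcons hlogequi ly Ly lf Lf hly hlf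
    hY0bdd hFbdd τ hτ hweak C hcov
end

section
/- Let A and B be real-valued random variables on a probability space with A ∈ [l, L] and B ∈ [l, L] almost surely, where 0 < l ≤ L. Then |E[A/B] − E[A]/E[B]| ≤ (1/l²) · √(Var(A) · Var(B)) + (L/l³) · Var(B). -/
open MeasureTheory ProbabilityTheory

/-!
Put `a = E[A]`, `b = E[B]` and `c = a / b`. Since `E[A - cB] = 0`,
`E[A/B] - c = E[(A - cB)(1/B - 1/b)]`, and writing `A - cB = (A - a) - c(B - b)` and
`1/B - 1/b = (b - B)/(Bb)` with `Bb ≥ l²` bounds the integrand by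
`(|A - a||B - b| + c(B - b)²)/l²`. Cauchy–Schwarz and `c ≤ L/l` finish the proof.
-/

lemma abs_sub_mul_mul_inv_sub_inv_le {l x y b c : ℝ} (hl : 0 < l) (hy : l ≤ y) (hb : l ≤ b)
    (hc : 0 ≤ c) :
    |(x - c * y) * (y⁻¹ - b⁻¹)| ≤ (|x - c * b| * |y - b| + c * (y - b) ^ 2) / l ^ 2 := by
  have hy0 : 0 < y := hl.trans_le hy
  have hb0 : 0 < b := hl.trans_le hb
  have hyb : l ^ 2 ≤ y * b := by nlinarith
  have hsplit : (x - c * y) * (y⁻¹ - b⁻¹) = ((x - c * b) - c * (y - b)) * (b - y) / (y * b) := by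
    field_simp
    ring
  rw [hsplit, abs_div, abs_mul, abs_of_pos (mul_pos hy0 hb0), abs_sub_comm b y]
  calc |x - c * b - c * (y - b)| * |y - b| / (y * b)
      ≤ (|x - c * b| + c * |y - b|) * |y - b| / l ^ 2 := by
        gcongr
        calc |x - c * b - c * (y - b)| ≤ |x - c * b| + |c * (y - b)| := abs_sub _ _
          _ = |x - c * b| + c * |y - b| := by rw [abs_mul, abs_of_nonneg hc]
    _ = (|x - c * b| * |y - b| + c * (y - b) ^ 2) / l ^ 2 := by rw [← sq_abs (y - b)]; ring

section

variable {Ω : Type*} {mΩ : MeasurableSpace Ω} {μ : Measure Ω}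

/-- When `∫ B = 0`, both sides reduce to `∫ A / B` through `x / 0 = 0` and `0⁻¹ = 0`. -/
lemma integral_div_sub_div_integral_s10 [IsProbabilityMeasure μ] {A B : Ω → ℝ}
    (hA : Integrable A μ) (hB : Integrable B μ) (hAB : Integrable (fun ω => A ω / B ω) μ)
    (hB0 : ∀ᵐ ω ∂μ, B ω ≠ 0) :
    (∫ ω, A ω / B ω ∂μ) - (∫ ω, A ω ∂μ) / (∫ ω, B ω ∂μ)
      = ∫ ω, (A ω - (∫ ω, A ω ∂μ) / (∫ ω, B ω ∂μ) * B ω) * ((B ω)⁻¹ - (∫ ω, B ω ∂μ)⁻¹) ∂μ := by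
  set a := ∫ ω, A ω ∂μ
  set b := ∫ ω, B ω ∂μ
  have hpointwise : ∀ᵐ ω ∂μ, (A ω - a / b * B ω) * ((B ω)⁻¹ - b⁻¹)
      = A ω / B ω - (a / b + (A ω - a / b * B ω) * b⁻¹) := by
    filter_upwards [hB0] with ω hω
    field_simp
    ring
  have hcentered : (a - a / b * b) * b⁻¹ = 0 := by
    rcases eq_or_ne b 0 with h | h <;> simp [h]
  rw [integral_congr_ae hpointwise, integral_sub hAB, integral_add (integrable_const _),
    integral_mul_const, integral_sub hA (hB.const_mul _), integral_const_mul, hcentered]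
  · simp
  · exact (hA.sub (hB.const_mul _)).mul_const _
  · exact (integrable_const _).add ((hA.sub (hB.const_mul _)).mul_const _)

lemma integral_abs_mul_abs_le_sqrt_mul_sqrt {X Y : Ω → ℝ} (hX : MemLp X 2 μ) (hY : MemLp Y 2 μ) :
    ∫ ω, |X ω| * |Y ω| ∂μ ≤ √(∫ ω, X ω ^ 2 ∂μ) * √(∫ ω, Y ω ^ 2 ∂μ) := by
  have h2 : ENNReal.ofReal 2 = 2 := by norm_num
  have := integral_mul_le_Lp_mul_Lq_of_nonneg Real.HolderConjugate.two_two
    (.of_forall fun ω => abs_nonneg (X ω)) (.of_forall fun ω => abs_nonneg (Y ω))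
    (h2 ▸ hX.abs) (h2 ▸ hY.abs)
  simpa only [Real.rpow_two, sq_abs, ← Real.sqrt_eq_rpow] using this

end

section

variable {Ω : Type*} [MeasureSpace Ω] [IsProbabilityMeasure (ℙ : Measure Ω)]

lemma var_eq_integral_sub_sq {U : Ω → ℝ} (hU : MemLp U 2) :
    var U = ∫ ω, (U ω - ∫ ω', U ω') ^ 2 := by
  rw [var, covar, ← variance_eq_integral hU.aemeasurable, ← covariance_self hU.aemeasurable,
    covariance_eq_sub hU hU]
  rfl

lemma integral_abs_sub_mul_abs_sub_le_sqrt_var {U V : Ω → ℝ} (hU : MemLp U 2) (hV : MemLp V 2) :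
    ∫ ω, |U ω - ∫ ω', U ω'| * |V ω - ∫ ω', V ω'| ≤ √(var U * var V) := by
  rw [var_eq_integral_sub_sq hU, var_eq_integral_sub_sq hV,
    Real.sqrt_mul (integral_nonneg fun _ => sq_nonneg _)]
  exact integral_abs_mul_abs_le_sqrt_mul_sqrt (hU.sub (memLp_const _)) (hV.sub (memLp_const _))

lemma abs_integral_sub_mul_mul_inv_sub_inv_le {l : ℝ} (hl : 0 < l) {A B : Ω → ℝ} (hA : MemLp A 2)
    (hB : MemLp B 2) (hBl : ∀ᵐ ω ∂ℙ, l ≤ B ω) (hc : 0 ≤ (∫ ω, A ω) / (∫ ω, B ω)) :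
    |∫ ω, (A ω - (∫ ω, A ω) / (∫ ω, B ω) * B ω) * ((B ω)⁻¹ - (∫ ω, B ω)⁻¹)|
      ≤ (√(var A * var B) + (∫ ω, A ω) / (∫ ω, B ω) * var B) / l ^ 2 := by
  set a := ∫ ω, A ω
  set b := ∫ ω, B ω
  set c := a / b
  have hlb : l ≤ b := (convex_Ici l).integral_mem isClosed_Ici hBl (hB.integrable one_le_two)
  have hcb : c * b = a := div_mul_cancel₀ a (hl.trans_le hlb).ne'
  have hprod : Integrable fun ω => |A ω - a| * |B ω - b| :=
    (hA.sub (memLp_const a)).abs.integrable_mul (hB.sub (memLp_const b)).abs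
  have hsq : Integrable fun ω => c * (B ω - b) ^ 2 :=
    (hB.sub (memLp_const b)).integrable_sq.const_mul c
  calc |∫ ω, (A ω - c * B ω) * ((B ω)⁻¹ - b⁻¹)|
      ≤ ∫ ω, |(A ω - c * B ω) * ((B ω)⁻¹ - b⁻¹)| := abs_integral_le_integral_abs
    _ ≤ ∫ ω, (|A ω - a| * |B ω - b| + c * (B ω - b) ^ 2) / l ^ 2 := by
        refine integral_mono_of_nonneg (.of_forall fun _ => abs_nonneg _)
          ((hprod.add hsq).div_const _) ?_
        filter_upwards [hBl] with ω hω
        simpa only [hcb] using abs_sub_mul_mul_inv_sub_inv_le (x := A ω) hl hω hlb hc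
    _ = ((∫ ω, |A ω - a| * |B ω - b|) + c * var B) / l ^ 2 := by
        rw [integral_div, integral_add hprod hsq, integral_const_mul, var_eq_integral_sub_sq hB]
    _ ≤ (√(var A * var B) + c * var B) / l ^ 2 := by
        gcongr
        exact integral_abs_sub_mul_abs_sub_le_sqrt_var hA hB

end

/-- If `A, B ∈ [l, L]` almost surely with `0 < l ≤ L`, then
`|E[A/B] − E[A]/E[B]| ≤ (1/l²)·√(Var(A)·Var(B)) + (L/l³)·Var(B)`. -/
theorem ratio_expectation_gap
    {Ω : Type*} [MeasureSpace Ω] [IsProbabilityMeasure (ℙ : Measure Ω)]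
    (l L : ℝ) (hl : 0 < l) (hlL : l ≤ L)
    (A B : Ω → ℝ) (hAmeas : Measurable A) (hBmeas : Measurable B)
    (hA : ∀ᵐ ω ∂ℙ, A ω ∈ Set.Icc l L)
    (hB : ∀ᵐ ω ∂ℙ, B ω ∈ Set.Icc l L) :
    |(∫ ω, A ω / B ω) - (∫ ω, A ω) / (∫ ω, B ω)|
      ≤ (1 / l ^ 2) * Real.sqrt (var A * var B) + (L / l ^ 3) * var B := by
  have hA2 : MemLp A 2 := memLp_of_bounded hA hAmeas.aestronglyMeasurable 2
  have hB2 : MemLp B 2 := memLp_of_bounded hB hBmeas.aestronglyMeasurable 2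
  have hAB : MemLp (fun ω => A ω / B ω) 1 :=
    memLp_of_bounded (a := 0) (b := L / l)
      (by filter_upwards [hA, hB] with ω ⟨hlA, hAL⟩ ⟨hlB, _⟩
          exact ⟨div_nonneg (hl.le.trans hlA) (hl.le.trans hlB),
            div_le_div₀ (hl.le.trans hlL) hAL hl hlB⟩)
      (hAmeas.div hBmeas).aestronglyMeasurable 1
  obtain ⟨hla, haL⟩ : ∫ ω, A ω ∈ Set.Icc l L :=
    (convex_Icc l L).integral_mem isClosed_Icc hA (hA2.integrable one_le_two)
  obtain ⟨hlb, -⟩ : ∫ ω, B ω ∈ Set.Icc l L :=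
    (convex_Icc l L).integral_mem isClosed_Icc hB (hB2.integrable one_le_two)
  have hc0 : 0 ≤ (∫ ω, A ω) / (∫ ω, B ω) := div_nonneg (hl.le.trans hla) (hl.le.trans hlb)
  have hcL : (∫ ω, A ω) / (∫ ω, B ω) ≤ L / l := div_le_div₀ (hl.le.trans hlL) haL hl hlb
  have hvarB : 0 ≤ var B := var_eq_integral_sub_sq hB2 ▸ integral_nonneg fun _ => sq_nonneg _
  rw [integral_div_sub_div_integral_s10 (hA2.integrable one_le_two) (hB2.integrable one_le_two)
    (hAB.integrable le_rfl) (hB.mono fun ω hω => (hl.trans_le hω.1).ne')]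
  calc _ ≤ (√(var A * var B) + (∫ ω, A ω) / (∫ ω, B ω) * var B) / l ^ 2 :=
        abs_integral_sub_mul_mul_inv_sub_inv_le hl hA2 hB2 (hB.mono fun _ hω => hω.1) hc0
    _ ≤ (√(var A * var B) + L / l * var B) / l ^ 2 := by gcongr
    _ = (1 / l ^ 2) * Real.sqrt (var A * var B) + (L / l ^ 3) * var B := by field_simp
end

section
/- Fix integers J ≥ 1, T ≥ 1, d ≥ 1, d̃ ≥ 1 and a real T × d matrix θ whose rows are θ₁ᵀ, …, θ_Tᵀ, and suppose the deterministic linear-algebra setting: real numbers (ϱ_s), vectors (φ_s ∈ ℝ^{d_t}), (ϑ_s ∈ ℝ^d), (ϑ̃_s ∈ ℝ^{d̃_Y}), (ρ_t), (φ'_t ∈ ℝ^{d_r}), (θ_t ∈ ℝ^d), (θ̃_t ∈ ℝ^{d̃}), and for each unit i = 1, …, J+1 vectors X_i ∈ ℝ^{d_t}, Z_i ∈ ℝ^{d_r}, μ_i ∈ ℝ^d, μ̃ᵞ_i ∈ ℝ^{d̃_Y}, μ̃ꟳ_i ∈ ℝ^{d̃}, and scalars ε_{i,s}, ε'_{i,t},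 such that Y⁽⁰⁾_{i,s} = ϱ_s + φ_sᵀX_i + ϑ_sᵀμ_i + ϑ̃_sᵀμ̃ᵞ_i + ε_{i,s} and F_{i,t} = ρ_t + φ'_tᵀZ_i + θ_tᵀμ_i + θ̃_tᵀμ̃ꟳ_i + ε'_{i,t}. Let w₂, …, w_{J+1} be real weights with Σ_{i=2}^{J+1} wᵢ = 1, and suppose the exact matching conditions hold: F_{1,t} = Σ_{i=2}^{J+1} wᵢ F_{i,t} for all t = 1, …, T; Z₁ = Σ_{i=2}^{J+1} wᵢ Zᵢ; and X₁ = Σ_{i=2}^{J+1} wᵢ Xᵢ. Suppose the d × d matrix θᵀθ is invertible. Then for every s, Y⁽⁰⁾_{1,s} − Σ_{i=2}^{J+1} wᵢ Y⁽⁰⁾_{i,s} = R₁ₛ + R₂ₛ + R₃ₛ + R₄ₛ + R₅ₛ, where, writing ε'ᵢ ∈ ℝ^T for the vector with entries ε'_{i,t} and θ̃ for the T × d̃ matrix with rows θ̃_tᵀ: R₁ₛ = ϑ_sᵀ(θᵀθ)⁻¹θᵀ Σ_{i=2}^{J+1} wᵢ ε'ᵢ, R₂ₛ = −ϑ_sᵀ(θᵀθ)⁻¹θᵀθ̃·(μ̃ꟳ₁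 − Σ_{i=2}^{J+1} wᵢ μ̃ꟳᵢ), R₃ₛ = −ϑ_sᵀ(θᵀθ)⁻¹θᵀ ε'₁, R₄ₛ = ε_{1,s} − Σ_{i=2}^{J+1} wᵢ ε_{i,s}, and R₅ₛ = ϑ̃_sᵀ(μ̃ᵞ₁ − Σ_{i=2}^{J+1} wᵢ μ̃ᵞᵢ). -/
open Matrix

/-- Auxiliary: dot product distributes over finite sums in the second argument. -/
lemma dotProduct_sum' {n : ℕ} {ι : Type*} (u : Fin n → ℝ) (s : Finset ι) (f : ι → Fin n → ℝ) :
    u ⬝ᵥ (∑ i ∈ s, f i) = ∑ i ∈ s, u ⬝ᵥ f i := by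
  simp only [dotProduct, Finset.sum_apply, Finset.mul_sum]
  exact Finset.sum_comm

/-- **Deterministic factor-model decomposition.** Under the factor models for the
target- and reference-domain outcomes, exact matching on the reference outcomes and on
the covariates in both domains, weights summing to one, and invertibility of `θᵀθ`, the
gap between the target unit's potential outcome under control and the transferred
synthetic control decomposes as `R₁ₛ + R₂ₛ + R₃ₛ + R₄ₛ + R₅ₛ`. -/
theorem factor_model_decomposition
    (J S T d dtil dY dt dr : ℕ)
    (hJ : 1 ≤ J) (hS : 1 ≤ S) (hT : 1 ≤ T) (hd : 1 ≤ d) (hdtil : 1 ≤ dtil) (hdY : 1 ≤ dY)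
    (ϱ : Fin S → ℝ) (φ : Fin S → Fin dt → ℝ)
    (ϑ : Fin S → Fin d → ℝ) (ϑtil : Fin S → Fin dY → ℝ)
    (ρ : Fin T → ℝ) (φ' : Fin T → Fin dr → ℝ)
    (θ : Fin T → Fin d → ℝ) (θtil : Fin T → Fin dtil → ℝ)
    (X : ℕ → Fin dt → ℝ) (Z : ℕ → Fin dr → ℝ) (μ : ℕ → Fin d → ℝ)
    (μY : ℕ → Fin dY → ℝ) (μF : ℕ → Fin dtil → ℝ)
    (ε : ℕ → Fin S → ℝ) (ε' : ℕ → Fin T → ℝ)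
    (Y0 : ℕ → Fin S → ℝ) (F : ℕ → Fin T → ℝ)
    (w : ℕ → ℝ)
    (hw : ∑ i ∈ Finset.Icc 2 (J + 1), w i = 1)
    -- structural factor models
    (hY0 : ∀ i ∈ Finset.Icc 1 (J + 1), ∀ s,
      Y0 i s = ϱ s + φ s ⬝ᵥ X i + ϑ s ⬝ᵥ μ i + ϑtil s ⬝ᵥ μY i + ε i s)
    (hF : ∀ i ∈ Finset.Icc 1 (J + 1), ∀ t,
      F i t = ρ t + φ' t ⬝ᵥ Z i + θ t ⬝ᵥ μ i + θtil t ⬝ᵥ μF i + ε' i t)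
    -- exact matching conditions
    (hmatchF : ∀ t, F 1 t = ∑ i ∈ Finset.Icc 2 (J + 1), w i * F i t)
    (hmatchZ : Z 1 = ∑ i ∈ Finset.Icc 2 (J + 1), w i • Z i)
    (hmatchX : X 1 = ∑ i ∈ Finset.Icc 2 (J + 1), w i • X i)
    -- θᵀθ is invertible
    (hinv : IsUnit ((Matrix.of θ)ᵀ * Matrix.of θ).det) :
    ∀ s, Y0 1 s - ∑ i ∈ Finset.Icc 2 (J + 1), w i * Y0 i s =
      -- R₁ₛ
      (ϑ s ⬝ᵥ (((Matrix.of θ)ᵀ * Matrix.of θ)⁻¹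
        *ᵥ ((Matrix.of θ)ᵀ *ᵥ ∑ i ∈ Finset.Icc 2 (J + 1), w i • ε' i)))
      -- R₂ₛ
      + (-(ϑ s ⬝ᵥ (((Matrix.of θ)ᵀ * Matrix.of θ)⁻¹
        *ᵥ ((Matrix.of θ)ᵀ *ᵥ (Matrix.of θtil
          *ᵥ (μF 1 - ∑ i ∈ Finset.Icc 2 (J + 1), w i • μF i))))))
      -- R₃ₛ
      + (-(ϑ s ⬝ᵥ (((Matrix.of θ)ᵀ * Matrix.of θ)⁻¹ *ᵥ ((Matrix.of θ)ᵀ *ᵥ ε' 1))))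
      -- R₄ₛ
      + (ε 1 s - ∑ i ∈ Finset.Icc 2 (J + 1), w i * ε i s)
      -- R₅ₛ
      + (ϑtil s ⬝ᵥ (μY 1 - ∑ i ∈ Finset.Icc 2 (J + 1), w i • μY i)) := by
  intro s
  set A := Matrix.of θ with hA
  set v : Fin d → ℝ := μ 1 - ∑ i ∈ Finset.Icc 2 (J+1), w i • μ i with hv
  have h1mem : (1:ℕ) ∈ Finset.Icc 1 (J+1) := by
    simp only [Finset.mem_Icc]; omega
  have hsub : ∀ i ∈ Finset.Icc 2 (J+1), i ∈ Finset.Icc 1 (J+1) := by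
    intro i hi; simp only [Finset.mem_Icc] at hi ⊢; omega
  -- key linear relation
  have key : A *ᵥ v =
      (∑ i ∈ Finset.Icc 2 (J+1), w i • ε' i)
      - (Matrix.of θtil *ᵥ (μF 1 - ∑ i ∈ Finset.Icc 2 (J+1), w i • μF i))
      - ε' 1 := by
    funext t
    have hm := hmatchF t
    rw [hF 1 h1mem t, Finset.sum_congr rfl (fun i hi => by rw [hF i (hsub i hi) t])] at hm
    simp only [mul_add, Finset.sum_add_distrib] at hm
    have e1 : ∑ i ∈ Finset.Icc 2 (J+1), w i * ρ t = ρ t := by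
      rw [← Finset.sum_mul, hw, one_mul]
    have e2 : φ' t ⬝ᵥ Z 1 = ∑ i ∈ Finset.Icc 2 (J+1), w i * (φ' t ⬝ᵥ Z i) := by
      rw [hmatchZ, dotProduct_sum']
      exact Finset.sum_congr rfl (fun i _ => dotProduct_smul _ _ _)
    rw [e1, e2] at hm
    have hAv : (A *ᵥ v) t = θ t ⬝ᵥ μ 1 - ∑ i ∈ Finset.Icc 2 (J+1), w i * (θ t ⬝ᵥ μ i) := by
      show θ t ⬝ᵥ v = _
      rw [hv, dotProduct_sub, dotProduct_sum']
      exact congrArg _ (Finset.sum_congr rfl (fun i _ => dotProduct_smul _ _ _))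
    have hBv : (Matrix.of θtil *ᵥ (μF 1 - ∑ i ∈ Finset.Icc 2 (J+1), w i • μF i)) t
        = θtil t ⬝ᵥ μF 1 - ∑ i ∈ Finset.Icc 2 (J+1), w i * (θtil t ⬝ᵥ μF i) := by
      show θtil t ⬝ᵥ _ = _
      rw [dotProduct_sub, dotProduct_sum']
      exact congrArg _ (Finset.sum_congr rfl (fun i _ => dotProduct_smul _ _ _))
    have hS : ((∑ i ∈ Finset.Icc 2 (J+1), w i • ε' i) : Fin T → ℝ) t
        = ∑ i ∈ Finset.Icc 2 (J+1), w i * ε' i t := by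
      simp [Finset.sum_apply]
    simp only [Pi.sub_apply, hAv, hBv, hS]
    linarith [hm]
  -- recover v
  have hvid : v = ((Aᵀ * A)⁻¹) *ᵥ (Aᵀ *ᵥ (A *ᵥ v)) := by
    rw [Matrix.mulVec_mulVec, Matrix.mulVec_mulVec, Matrix.mul_assoc,
      Matrix.nonsing_inv_mul _ hinv, Matrix.one_mulVec]
  have hmain : ϑ s ⬝ᵥ v =
      (ϑ s ⬝ᵥ ((Aᵀ * A)⁻¹ *ᵥ (Aᵀ *ᵥ ∑ i ∈ Finset.Icc 2 (J+1), w i • ε' i)))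
      - (ϑ s ⬝ᵥ ((Aᵀ * A)⁻¹ *ᵥ (Aᵀ *ᵥ (Matrix.of θtil
          *ᵥ (μF 1 - ∑ i ∈ Finset.Icc 2 (J+1), w i • μF i)))))
      - (ϑ s ⬝ᵥ ((Aᵀ * A)⁻¹ *ᵥ (Aᵀ *ᵥ ε' 1))) := by
    conv_lhs => rw [hvid, key]
    simp only [Matrix.mulVec_sub, dotProduct_sub]
  -- expand the outcome models
  have hL : Y0 1 s - ∑ i ∈ Finset.Icc 2 (J+1), w i * Y0 i s =
      ϑ s ⬝ᵥ v + (ε 1 s - ∑ i ∈ Finset.Icc 2 (J+1), w i * ε i s)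
      + (ϑtil s ⬝ᵥ (μY 1 - ∑ i ∈ Finset.Icc 2 (J+1), w i • μY i)) := by
    rw [hY0 1 h1mem s, Finset.sum_congr rfl (fun i hi => by rw [hY0 i (hsub i hi) s])]
    simp only [mul_add, Finset.sum_add_distrib]
    have e1 : ∑ i ∈ Finset.Icc 2 (J+1), w i * ϱ s = ϱ s := by
      rw [← Finset.sum_mul, hw, one_mul]
    have e2 : φ s ⬝ᵥ X 1 = ∑ i ∈ Finset.Icc 2 (J+1), w i * (φ s ⬝ᵥ X i) := by
      rw [hmatchX, dotProduct_sum']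
      exact Finset.sum_congr rfl (fun i _ => dotProduct_smul _ _ _)
    have e3 : ϑ s ⬝ᵥ v = ϑ s ⬝ᵥ μ 1 - ∑ i ∈ Finset.Icc 2 (J+1), w i * (ϑ s ⬝ᵥ μ i) := by
      rw [hv, dotProduct_sub, dotProduct_sum']
      exact congrArg _ (Finset.sum_congr rfl (fun i _ => dotProduct_smul _ _ _))
    have e4 : ϑtil s ⬝ᵥ (μY 1 - ∑ i ∈ Finset.Icc 2 (J+1), w i • μY i)
        = ϑtil s ⬝ᵥ μY 1 - ∑ i ∈ Finset.Icc 2 (J+1), w i * (ϑtil s ⬝ᵥ μY i) := by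
      rw [dotProduct_sub, dotProduct_sum']
      exact congrArg _ (Finset.sum_congr rfl (fun i _ => dotProduct_smul _ _ _))
    rw [e1, e3, e4]
    linarith [e2]
  rw [hL, hmain]
  ring
end
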